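/- Let Π be a CNF theory, M a model of Π, and S the steady set of M for Π. Then the set E = (M \ S) \ atom((simpl(Π,M))_{M\S}) of atoms of M \ S not occurring in the simplified theory is erasable in M for Π whenever it is nonempty; i.e., M \ E is a model of Π. -/

import Mathlib

structure Clause where
  head : Finset ℕ
  body : Finset ℕ
deriving DecidableEq

abbrev Theory := Finset Clause

/-- interpretation I satisfies clause c -/
def satC (I : Finset ℕ) (c : Clause) : Prop :=
  (c.head ∩ I).Nonempty ∨ ¬ c.body ⊆ I

def isModel (T : Theory) (I : Finset ℕ) : Prop := ∀ c ∈ T, satC I c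

def isMinModel (T : Theory) (I : Finset ℕ) : Prop :=
  isModel T I ∧ ∀ J ⊂ I, ¬ isModel T J

def Positive (T : Theory) : Prop := ∀ c ∈ T, c.head.Nonempty

def Horn (T : Theory) : Prop := ∀ c ∈ T, c.head.card = 1

/-- atoms occurring in a theory -/
def atoms (T : Theory) : Finset ℕ := T.biUnion (fun c => c.head ∪ c.body)

/-- c_{X←} : project head on X -/
def projHeadC (c : Clause) (X : Finset ℕ) : Clause := ⟨c.head ∩ X, c.body⟩
/-- c_X : project head and body on X -/
def projC (c : Clause) (X : Finset ℕ) : Clause := ⟨c.head ∩ X, c.body ∩ X⟩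

/-- Π_{X←} -/
def projHeadT (T : Theory) (X : Finset ℕ) : Theory :=
  (T.image (fun c => projHeadC c X)).filter (fun c => c.head.Nonempty)

/-- Π_X -/
def projT (T : Theory) (X : Finset ℕ) : Theory :=
  (T.image (fun c => projC c X)).filter (fun c => c.head.Nonempty)

/-- Π^{nd} : single-head fragment -/
def nd (T : Theory) : Theory := T.filter (fun c => c.head.card = 1)

/-- the steady set of M for Π is the minimal model of Π^{nd}_{M←} -/
def isSteady (T : Theory) (M S : Finset ℕ) : Prop :=
  isMinModel (nd (projHeadT T M)) S

def simpl (T : Theory) (M S : Finset ℕ) : Theory :=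
  T.filter (fun c => c.head ∩ S = ∅ ∧ c.body ⊆ M)

/-- simplified theory of Π w.r.t. M (with steady set S) -/
def simplT (T : Theory) (M S : Finset ℕ) : Theory := projT (simpl T M S) (M \ S)

/-- E erasable in M for T -/
def Erasable (T : Theory) (M E : Finset ℕ) : Prop :=
  E.Nonempty ∧ E ⊆ M ∧ isModel T (M \ E)

def Outbound (T : Theory) (Y Z : Finset ℕ) : Prop :=
  ∃ c ∈ T, (c.head ∩ Z).Nonempty ∧ (c.body ∩ (Y \ Z)).Nonempty ∧
    c.body ∩ Z = ∅ ∧ c.head ∩ (Y \ Z) = ∅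

def Elementary (T : Theory) (Y : Finset ℕ) : Prop :=
  Y.Nonempty ∧ Y ⊆ atoms T ∧ ∀ Z, Z ⊂ Y → Z.Nonempty → Outbound T Y Z

def HEF (T : Theory) : Prop :=
  ∀ c ∈ T, ∀ E, Elementary T E → (E ∩ c.head).card ≤ 1

def DisjunctiveSet (T : Theory) (S : Finset ℕ) : Prop :=
  ∃ c ∈ T, 1 < (c.head ∩ S).card

def SuperElementary (T : Theory) (X : Finset ℕ) : Prop :=
  Elementary T X ∧ ¬ Outbound T (atoms T) X

def posForm (T : Theory) (phi : ℕ) : Theory :=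
  T.filter (fun c => c.head.Nonempty) ∪
  (T.filter (fun c => c.head = ∅)).image (fun c => ⟨{phi}, c.body⟩) ∪
  (atoms T).image (fun a => ⟨{a}, {phi}⟩)

/-!
Since `S ⊆ M`, erasing `E` from `M` leaves `S ∪ (M ∩ atom(simplified theory))`. A clause whose
head meets `S` is satisfied by `S`, and one whose body leaves `M` by every subset of `M`. Any
other clause lies in `simpl(Π, M)`; as `M` satisfies it, its head has an atom `a ∈ M \ S`, which
is then a head atom of its projection on `M \ S`, a clause of the simplified theory, so `a`
survives the erasure.
-/

open Finset

lemma Finset.sdiff_sdiff_sdiff_eq_union_inter {α : Type*} [DecidableEq α] {M S A : Finset α}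
    (hSM : S ⊆ M) : M \ ((M \ S) \ A) = S ∪ (M ∩ A) := by
  ext a
  have := @hSM a
  simp only [mem_sdiff, mem_union, mem_inter]
  tauto

lemma mem_atoms_of_mem_head {T : Theory} {c : Clause} {a : ℕ} (hc : c ∈ T) (ha : a ∈ c.head) :
    a ∈ atoms T :=
  mem_biUnion.2 ⟨c, hc, mem_union_left _ ha⟩

lemma projC_mem_projT {T : Theory} {c : Clause} {X : Finset ℕ} (hc : c ∈ T)
    (h : (c.head ∩ X).Nonempty) : projC c X ∈ projT T X :=
  mem_filter.2 ⟨mem_image_of_mem _ hc, h⟩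

lemma mem_atoms_projT {T : Theory} {c : Clause} {X : Finset ℕ} {a : ℕ} (hc : c ∈ T)
    (ha : a ∈ c.head ∩ X) : a ∈ atoms (projT T X) :=
  mem_atoms_of_mem_head (projC_mem_projT hc ⟨a, ha⟩) ha

lemma mem_atoms_simplT {T : Theory} {M S : Finset ℕ} {c : Clause} {a : ℕ} (hc : c ∈ T)
    (hbody : c.body ⊆ M) (hS : c.head ∩ S = ∅) (ha : a ∈ c.head) (haM : a ∈ M) :
    a ∈ atoms (simplT T M S) := by
  have haS : a ∉ S := fun haS => by simpa [hS] using mem_inter.2 ⟨ha, haS⟩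
  exact mem_atoms_projT (mem_filter.2 ⟨hc, hS, hbody⟩) (mem_inter.2 ⟨ha, mem_sdiff.2 ⟨haM, haS⟩⟩)

lemma isModel_union_inter_atoms_simplT {T : Theory} {M S : Finset ℕ} (hM : isModel T M)
    (hSM : S ⊆ M) :
    isModel T (S ∪ (M ∩ atoms (simplT T M S))) := by
  intro c hc
  by_cases hbody : c.body ⊆ M
  · left
    rcases (c.head ∩ S).eq_empty_or_nonempty with hS | ⟨a, ha⟩
    · obtain ⟨a, ha⟩ := (hM c hc).resolve_right (not_not.2 hbody)
      obtain ⟨haH, haM⟩ := mem_inter.1 ha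
      exact ⟨a, mem_inter.2 ⟨haH, mem_union_right _
        (mem_inter.2 ⟨haM, mem_atoms_simplT hc hbody hS haH haM⟩)⟩⟩
    · exact ⟨a, inter_subset_inter_left subset_union_left ha⟩
  · exact Or.inr fun h => hbody (h.trans (union_subset hSM inter_subset_left))

theorem stmt14_general (T : Theory) (M S : Finset ℕ) (hM : isModel T M)
    (hSM : S ⊆ M)
    (hne : ((M \ S) \ atoms (simplT T M S)).Nonempty) :
    Erasable T M ((M \ S) \ atoms (simplT T M S)) := by
  refine ⟨hne, sdiff_subset.trans sdiff_subset, ?_⟩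
  rw [sdiff_sdiff_sdiff_eq_union_inter hSM]
  exact isModel_union_inter_atoms_simplT hM hSM

theorem stmt14 (T : Theory) (M S : Finset ℕ) (hM : isModel T M) (hS : isSteady T M S)
    (hSM : S ⊆ M)
    (hne : ((M \ S) \ atoms (simplT T M S)).Nonempty) :
    Erasable T M ((M \ S) \ atoms (simplT T M S)) :=
  stmt14_general T M S hM hSM hne
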